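/- For every Schwartz function f on R^d there exist a Schwartz function f_0 on R^d and a strictly positive, rotation-invariant Schwartz function g on R^d such that f(x) = f_0(x) g(x) for all x. -/

import Mathlib

/-!
Take `g x = ∑ εᵢ exp (-‖x‖² / (i + 1))` with positive weights `εᵢ` decaying faster than any
power of `i`. Each derivative of a Gaussian is the Gaussian times a polynomial in `‖x‖`, and
`(1 + ‖x‖) ^ p exp (-‖x‖² / (i + 1))` grows only polynomially in `i`, so `g` is a radial Schwartz
function; its term `i = ⌊‖x‖²⌋` gives `g x ≥ ε_⌊‖x‖²⌋ / e`.

The weights are built from the seminorm bounds `Q j` of `f` as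
`εₖ = min_{j ≤ k} min (1, Q (j²) / (k + 1) ^ j)`. Each `j` alone forces `εₖ = O(k ^ -j)`,
while taking the minimum only over `j ≤ k` keeps `ε` large enough that every
`(1 + ‖x‖) ^ M ‖Dⁿ f x‖` is `O(ε_⌊‖x‖²⌋ ^ r)` for every `r`, hence `O(g ^ r)`. By Faà di Bruno,
`‖Dᵐ (1 / g)‖` is `O((1 + ‖x‖) ^ 2m / g ^ (m + 1))`, and Leibniz' rule then shows that `f / g` is
Schwartz.
-/

open scoped ContDiff Nat SchwartzMap
open Real

section DominatingWeight

variable {Q : ℕ → ℝ}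

noncomputable def dominatingWeight (Q : ℕ → ℝ) (k : ℕ) : ℝ :=
  (Finset.range (k + 1)).inf' Finset.nonempty_range_add_one
    fun j => min 1 (Q (j ^ 2) / ((k : ℝ) + 1) ^ j)

lemma dominatingWeight_pos (hQ : ∀ j, 0 < Q j) (k : ℕ) : 0 < dominatingWeight Q k :=
  (Finset.lt_inf'_iff _).2 fun j _ => lt_min one_pos (by have := hQ (j ^ 2); positivity)

lemma dominatingWeight_le_div {j k : ℕ} (hjk : j ≤ k) :
    dominatingWeight Q k ≤ Q (j ^ 2) / ((k : ℝ) + 1) ^ j :=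
  (Finset.inf'_le _ (Finset.mem_range_succ_iff.2 hjk)).trans (min_le_right _ _)

lemma summable_dominatingWeight_mul_pow (hQ : ∀ j, 0 < Q j) (p : ℕ) :
    Summable fun k => dominatingWeight Q k * ((k : ℝ) + 1) ^ p := by
  have hinv : Summable fun k : ℕ => Q ((p + 2) ^ 2) * (((k : ℝ) + 1) ^ 2)⁻¹ :=
    ((summable_nat_add_iff 1).2 (Real.summable_nat_pow_inv.2 one_lt_two)).mul_left _
      |>.congr fun k => by push_cast; rfl
  refine hinv.of_norm_bounded_eventually_nat (Filter.eventually_atTop.2 ⟨p + 2, fun k hk => ?_⟩)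
  rw [norm_of_nonneg (by have := dominatingWeight_pos hQ k; positivity)]
  calc dominatingWeight Q k * ((k : ℝ) + 1) ^ p
      ≤ Q ((p + 2) ^ 2) / ((k : ℝ) + 1) ^ (p + 2) * ((k : ℝ) + 1) ^ p := by
        gcongr; exact dominatingWeight_le_div hk
    _ = Q ((p + 2) ^ 2) * (((k : ℝ) + 1) ^ 2)⁻¹ := by
        field_simp; ring

/-- If the minimum defining the weight at `k` is attained at `j`, the hypothesis at `M + 2 j r`
gives `s ^ M * A * (k + 1) ^ (j r) ≤ Q (M + 2 j r)`; this is at most `Q (j ^ 2)` once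
`j ≥ 2 r + M + N`, and one of finitely many values of `Q` otherwise. -/
lemma exists_le_mul_dominatingWeight_pow (hQ : Monotone Q) (hQ₁ : ∀ j, 1 ≤ Q j) (M N r : ℕ) :
    ∃ C, ∀ (k : ℕ) {s A : ℝ}, 1 ≤ s → (k : ℝ) + 1 ≤ s ^ 2 → 0 ≤ A →
      (∀ j, N ≤ j → s ^ j * A ≤ Q j) → s ^ M * A ≤ C * dominatingWeight Q k ^ r := by
  set Jb := M + N + 2 * (2 * r + M + N) * r with hJb
  refine ⟨Q Jb, fun k s A hs hks hA hQA => ?_⟩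
  have hpowle : ∀ {a b : ℕ}, a ≤ b → s ^ a * A ≤ s ^ b * A := fun hab =>
    mul_le_mul_of_nonneg_right (pow_le_pow_right₀ hs hab) hA
  have htriv : s ^ M * A ≤ Q Jb :=
    (hpowle (le_max_left M N)).trans <| (hQA _ (le_max_right M N)).trans (hQ (by omega))
  rcases Nat.eq_zero_or_pos r with rfl | hr
  · simpa using htriv
  obtain ⟨j, -, hj⟩ := Finset.exists_mem_eq_inf' Finset.nonempty_range_add_one
    fun j => min 1 (Q (j ^ 2) / ((k : ℝ) + 1) ^ j)
  rw [dominatingWeight, hj]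
  rcases min_cases 1 (Q (j ^ 2) / ((k : ℝ) + 1) ^ j) with ⟨hmin, -⟩ | ⟨hmin, -⟩
  · simpa [hmin] using htriv
  set J := max (M + 2 * j * r) N
  have hQJ : Q J ≤ Q Jb * Q (j ^ 2) ^ r := by
    by_cases hj_large : 2 * r + M + N ≤ j
    · calc Q J ≤ Q (j ^ 2) := hQ (max_le (by nlinarith) (by nlinarith))
        _ ≤ Q (j ^ 2) ^ r := le_self_pow₀ (hQ₁ _) hr.ne'
        _ ≤ Q Jb * Q (j ^ 2) ^ r :=
          le_mul_of_one_le_left (by have := hQ₁ (j ^ 2); positivity) (hQ₁ Jb)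
    · calc Q J ≤ Q Jb := hQ (max_le (by nlinarith) (by omega))
        _ ≤ Q Jb * Q (j ^ 2) ^ r := le_mul_of_one_le_right (by linarith [hQ₁ Jb])
          (one_le_pow₀ (hQ₁ _))
  have hmain : s ^ M * A * ((k : ℝ) + 1) ^ (j * r) ≤ Q J :=
    calc s ^ M * A * ((k : ℝ) + 1) ^ (j * r) ≤ s ^ M * A * (s ^ 2) ^ (j * r) := by gcongr
      _ = s ^ (M + 2 * j * r) * A := by ring
      _ ≤ Q J := (hpowle (le_max_left _ _)).trans (hQA J (le_max_right _ _))
  rw [hmin, div_pow, ← pow_mul, ← mul_div_assoc, le_div_iff₀ (by positivity)]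
  exact hmain.trans hQJ

end DominatingWeight

section SchwartzWeight

variable {E F : Type*} [NormedAddCommGroup E] [NormedSpace ℝ E] [NormedAddCommGroup F]
  [NormedSpace ℝ F]

theorem SchwartzMap.exists_dominatingWeight (f : 𝓢(E, F)) :
    ∃ ε : ℕ → ℝ, (∀ k, 0 < ε k) ∧ (∀ p : ℕ, Summable fun k => ε k * ((k : ℝ) + 1) ^ p) ∧
      ∀ M n r : ℕ, ∃ C, ∀ x, (1 + ‖x‖) ^ M * ‖iteratedFDeriv ℝ n f x‖ ≤ C * ε ⌊‖x‖ ^ 2⌋₊ ^ r := by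
  set Q : ℕ → ℝ := fun j =>
    2 ^ j * (Finset.Iic (j, j)).sup (fun m => SchwartzMap.seminorm ℝ m.1 m.2) f + 1
  have hQ_mono : Monotone Q := fun i j hij => by
    have hsup : (Finset.Iic (i, i)).sup (fun m => SchwartzMap.seminorm ℝ m.1 m.2) f
        ≤ (Finset.Iic (j, j)).sup (fun m => SchwartzMap.seminorm ℝ m.1 m.2) f :=
      Seminorm.le_def.1 (Finset.sup_mono (Finset.Iic_subset_Iic.2 (Prod.mk_le_mk.2 ⟨hij, hij⟩))) f
    exact add_le_add_left (mul_le_mul (pow_le_pow_right₀ one_le_two hij) hsup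
      (apply_nonneg _ _) (by positivity)) 1
  have hQ₁ : ∀ j, 1 ≤ Q j := fun j => by
    simp only [Q, le_add_iff_nonneg_left]
    exact mul_nonneg (by positivity) (apply_nonneg _ _)
  refine ⟨dominatingWeight Q, dominatingWeight_pos fun j => one_pos.trans_le (hQ₁ j),
    summable_dominatingWeight_mul_pow fun j => one_pos.trans_le (hQ₁ j), fun M n r => ?_⟩
  obtain ⟨C, hC⟩ := exists_le_mul_dominatingWeight_pow hQ_mono hQ₁ M n r
  refine ⟨C, fun x => hC _ (by linarith [norm_nonneg x]) ?_ (norm_nonneg _) fun j hj => ?_⟩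
  · nlinarith [Nat.floor_le (sq_nonneg ‖x‖), norm_nonneg x]
  · linarith [SchwartzMap.one_add_le_sup_seminorm_apply (𝕜 := ℝ) (m := (j, j)) le_rfl hj f x]

end SchwartzWeight

section GaussianBounds

lemma norm_iteratedFDeriv_fun_id_le {𝕜 E : Type*} [NontriviallyNormedField 𝕜]
    [NormedAddCommGroup E] [NormedSpace 𝕜 E] (i : ℕ) (x : E) :
    ‖iteratedFDeriv 𝕜 i (fun y : E => y) x‖ ≤ 1 + ‖x‖ := by
  have hfderiv : fderiv 𝕜 (fun y : E => y) = fun _ => ContinuousLinearMap.id 𝕜 E :=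
    funext fun _ => fderiv_fun_id
  match i with
  | 0 => simp
  | 1 =>
    rw [← norm_iteratedFDeriv_fderiv, norm_iteratedFDeriv_zero, hfderiv]
    linarith [ContinuousLinearMap.norm_id_le (𝕜 := 𝕜) (E := E), norm_nonneg x]
  | n + 2 =>
    rw [← norm_iteratedFDeriv_fderiv, hfderiv, iteratedFDeriv_const_of_ne (by omega)]
    simp only [Pi.zero_apply, norm_zero]
    positivity

variable {E : Type*} [NormedAddCommGroup E] [InnerProductSpace ℝ E]

lemma norm_iteratedFDeriv_norm_sq_le (i : ℕ) (x : E) :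
    ‖iteratedFDeriv ℝ i (fun y : E => ‖y‖ ^ 2) x‖ ≤ 2 ^ i * (1 + ‖x‖) ^ 2 := by
  have hinner : (fun y : E => ‖y‖ ^ 2) = fun y => innerSL ℝ y y := by
    funext y; rw [innerSL_apply_apply, real_inner_self_eq_norm_sq]
  rw [hinner]
  refine ((innerSL ℝ).norm_iteratedFDeriv_le_of_bilinear_of_le_one contDiff_id contDiff_id x
    (N := ⊤) le_top (norm_innerSL_le ℝ)).trans ?_
  have hterm : ∀ j ∈ Finset.range (i + 1), (i.choose j : ℝ) *
      ‖iteratedFDeriv ℝ j (fun y : E => y) x‖ * ‖iteratedFDeriv ℝ (i - j) (fun y : E => y) x‖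
        ≤ i.choose j * (1 + ‖x‖) ^ 2 := fun j _ => by
    rw [mul_assoc, sq]
    gcongr <;> exact norm_iteratedFDeriv_fun_id_le _ x
  refine (Finset.sum_le_sum hterm).trans_eq ?_
  rw [← Finset.sum_mul, ← Nat.cast_sum, Nat.sum_range_choose]
  push_cast
  ring

lemma contDiff_exp_neg_mul_norm_sq (c : ℝ) : ContDiff ℝ ∞ fun y : E => exp (-(c * ‖y‖ ^ 2)) :=
  contDiff_exp.comp (contDiff_const.mul (contDiff_norm_sq ℝ)).neg

lemma norm_iteratedFDeriv_exp_neg_mul_norm_sq_le {c : ℝ} (hc₀ : 0 ≤ c) (hc₁ : c ≤ 1)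
    (m : ℕ) (x : E) :
    ‖iteratedFDeriv ℝ m (fun y : E => exp (-(c * ‖y‖ ^ 2))) x‖
      ≤ m ! * exp (-(c * ‖x‖ ^ 2)) * (2 * (1 + ‖x‖) ^ 2) ^ m := by
  have hφ : ContDiff ℝ ∞ (fun y : E => -(c * ‖y‖ ^ 2)) :=
    (contDiff_const.mul (contDiff_norm_sq ℝ)).neg
  refine norm_iteratedFDeriv_comp_le (g := exp) contDiff_exp hφ (mod_cast le_top) x
    (fun i _ => ?_) (fun i hi _ => ?_)
  · rw [norm_iteratedFDeriv_eq_norm_iteratedDeriv, iteratedDeriv_eq_iterate, iter_deriv_exp,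
      norm_of_nonneg (exp_nonneg _)]
  · have hneg : (fun y : E => -(c * ‖y‖ ^ 2)) = (-c) • fun y : E => ‖y‖ ^ 2 := by
      funext y; simp only [Pi.smul_apply, smul_eq_mul]; ring
    have hx : 1 ≤ (1 + ‖x‖) ^ 2 := one_le_pow₀ (by linarith [norm_nonneg x])
    rw [hneg, iteratedFDeriv_const_smul_apply ((contDiff_norm_sq ℝ).of_le le_top).contDiffAt,
      norm_smul, norm_neg, norm_of_nonneg hc₀, mul_pow]
    calc c * ‖iteratedFDeriv ℝ i (fun y : E => ‖y‖ ^ 2) x‖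
        ≤ 1 * (2 ^ i * (1 + ‖x‖) ^ 2) := by
          gcongr
          exact norm_iteratedFDeriv_norm_sq_le i x
      _ ≤ 2 ^ i * ((1 + ‖x‖) ^ 2) ^ i := by
          rw [one_mul]; gcongr; exact le_self_pow₀ hx (by omega)

end GaussianBounds

lemma one_add_pow_le_pow_mul_exp (p : ℕ) {r : ℝ} (hr : 0 ≤ r) :
    (1 + r) ^ p ≤ (p : ℝ) ^ p * exp r := by
  rcases Nat.eq_zero_or_pos p with rfl | hp
  · simpa using one_le_exp hr
  have hp' : (0 : ℝ) < p := by exact_mod_cast hp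
  calc (1 + r) ^ p ≤ ((p : ℝ) * (1 + r / p)) ^ p := by
        gcongr
        rw [mul_add, mul_div_cancel₀ _ hp'.ne']
        linarith [show (1 : ℝ) ≤ p by exact_mod_cast hp]
    _ = (p : ℝ) ^ p * (1 - (-r) / p) ^ p := by rw [mul_pow]; ring
    _ ≤ (p : ℝ) ^ p * exp r := by
        gcongr
        simpa using one_sub_div_pow_le_exp_neg (n := p) (t := -r) (by linarith)

lemma one_add_pow_mul_exp_neg_inv_mul_sq_le (p : ℕ) {a r : ℝ} (ha : 1 ≤ a) (hr : 0 ≤ r) :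
    (1 + r) ^ p * exp (-(a⁻¹ * r ^ 2)) ≤ (2 * a) ^ p + (p : ℝ) ^ p := by
  have hexp : exp (-(a⁻¹ * r ^ 2)) ≤ 1 := exp_le_one_iff.2 (neg_nonpos.2 (by positivity))
  rcases le_or_gt r a with hra | hra
  · calc (1 + r) ^ p * exp (-(a⁻¹ * r ^ 2)) ≤ (2 * a) ^ p * 1 := by
          gcongr; linarith
      _ ≤ (2 * a) ^ p + (p : ℝ) ^ p := by rw [mul_one]; exact le_add_of_nonneg_right (by positivity)
  · -- past `r = a` the Gaussian factor is below `exp (-r)`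
    have hsq : r ≤ a⁻¹ * r ^ 2 := by
      rw [inv_mul_eq_div, le_div_iff₀ (by linarith)]; nlinarith
    calc (1 + r) ^ p * exp (-(a⁻¹ * r ^ 2)) ≤ ((p : ℝ) ^ p * exp r) * exp (-r) := by
          gcongr
          exact one_add_pow_le_pow_mul_exp p hr
      _ = (p : ℝ) ^ p := by rw [mul_assoc, ← exp_add, add_neg_cancel, exp_zero, mul_one]
      _ ≤ (2 * a) ^ p + (p : ℝ) ^ p := le_add_of_nonneg_left (pow_nonneg (by linarith) p)

section GaussianSeries

variable {E : Type*} [NormedAddCommGroup E] {ε : ℕ → ℝ}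

noncomputable def gaussianTerm (i : ℕ) (x : E) : ℝ :=
  exp (-(((i : ℝ) + 1)⁻¹ * ‖x‖ ^ 2))

noncomputable def gaussianSeries (ε : ℕ → ℝ) (x : E) : ℝ :=
  ∑' i, ε i * gaussianTerm i x

lemma gaussianTerm_pos (i : ℕ) (x : E) : 0 < gaussianTerm i x := exp_pos _

lemma gaussianTerm_le_one (i : ℕ) (x : E) : gaussianTerm i x ≤ 1 :=
  exp_le_one_iff.2 (neg_nonpos.2 (by positivity))

lemma exp_neg_one_le_gaussianTerm {i : ℕ} {x : E} (hx : ‖x‖ ^ 2 ≤ (i : ℝ) + 1) :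
    exp (-1) ≤ gaussianTerm i x := by
  refine exp_le_exp.2 (neg_le_neg ?_)
  rwa [inv_mul_le_iff₀ (by positivity), mul_one]

lemma one_add_norm_pow_mul_gaussianTerm_le (p i : ℕ) (x : E) :
    (1 + ‖x‖) ^ p * gaussianTerm i x ≤ 2 ^ p * ((i : ℝ) + 1) ^ p + (p : ℝ) ^ p := by
  rw [← mul_pow]
  exact one_add_pow_mul_exp_neg_inv_mul_sq_le p (by linarith [i.cast_nonneg (α := ℝ)])
    (norm_nonneg x)

lemma summable_mul_gaussianTerm (hε : ∀ i, 0 ≤ ε i) (hs : Summable ε) (x : E) :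
    Summable fun i => ε i * gaussianTerm i x :=
  hs.of_nonneg_of_le (fun i => mul_nonneg (hε i) (gaussianTerm_pos i x).le) fun i =>
    mul_le_of_le_one_right (hε i) (gaussianTerm_le_one i x)

lemma summable_mul_two_pow_mul_add (hsum : ∀ p : ℕ, Summable fun i => ε i * ((i : ℝ) + 1) ^ p)
    (p : ℕ) : Summable fun i => ε i * (2 ^ p * ((i : ℝ) + 1) ^ p + (p : ℝ) ^ p) :=
  (((hsum p).mul_left (2 ^ p)).add ((hsum 0).mul_left ((p : ℝ) ^ p))).congr fun i => by ring

lemma one_add_norm_pow_mul_gaussianSeries_le (hε : ∀ i, 0 ≤ ε i)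
    (hsum : ∀ p : ℕ, Summable fun i => ε i * ((i : ℝ) + 1) ^ p) (p : ℕ) (x : E) :
    (1 + ‖x‖) ^ p * gaussianSeries ε x
      ≤ ∑' i, ε i * (2 ^ p * ((i : ℝ) + 1) ^ p + (p : ℝ) ^ p) := by
  have hs := summable_mul_gaussianTerm hε ((hsum 0).congr fun i => by simp) x
  rw [gaussianSeries, ← tsum_mul_left]
  refine (hs.mul_left _).tsum_le_tsum (fun i => ?_) (summable_mul_two_pow_mul_add hsum p)
  rw [mul_left_comm]
  exact mul_le_mul_of_nonneg_left (one_add_norm_pow_mul_gaussianTerm_le p i x) (hε i)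

lemma gaussianSeries_pos (hε : ∀ i, 0 < ε i) (hs : Summable ε) (x : E) :
    0 < gaussianSeries ε x :=
  (summable_mul_gaussianTerm (fun i => (hε i).le) hs x).tsum_pos
    (fun i => mul_nonneg (hε i).le (gaussianTerm_pos i x).le) 0
    (mul_pos (hε 0) (gaussianTerm_pos 0 x))

lemma gaussianSeries_le_tsum (hε : ∀ i, 0 ≤ ε i) (hs : Summable ε) (x : E) :
    gaussianSeries ε x ≤ ∑' i, ε i :=
  (summable_mul_gaussianTerm hε hs x).tsum_le_tsum
    (fun i => mul_le_of_le_one_right (hε i) (gaussianTerm_le_one i x)) hs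

lemma gaussianSeries_eq_of_norm_eq {x y : E} (h : ‖x‖ = ‖y‖) :
    gaussianSeries ε x = gaussianSeries ε y := by
  simp only [gaussianSeries, gaussianTerm, h]

/-- The term `i = ⌊‖x‖²⌋₊` of the series is at least `ε i / e`. -/
lemma exists_le_mul_gaussianSeries_pow (hε : ∀ i, 0 ≤ ε i) (hs : Summable ε) {u : E → ℝ}
    {C : ℝ} {r : ℕ} (hu : ∀ x, u x ≤ C * ε ⌊‖x‖ ^ 2⌋₊ ^ r) :
    ∃ C', ∀ x, u x ≤ C' * gaussianSeries ε x ^ r := by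
  refine ⟨|C| * exp 1 ^ r, fun x => (hu x).trans ?_⟩
  set k := ⌊‖x‖ ^ 2⌋₊
  have hεk : ε k ≤ exp 1 * gaussianSeries ε x :=
    calc ε k = exp 1 * (ε k * exp (-1)) := by rw [mul_left_comm, ← exp_add]; simp
      _ ≤ exp 1 * (ε k * gaussianTerm k x) := by
          gcongr
          exacts [hε k, exp_neg_one_le_gaussianTerm (Nat.lt_floor_add_one _).le]
      _ ≤ exp 1 * gaussianSeries ε x := by
          gcongr
          exact (summable_mul_gaussianTerm hε hs x).le_tsum k fun j _ =>
            mul_nonneg (hε j) (gaussianTerm_pos j x).le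
  rw [mul_assoc, ← mul_pow]
  exact mul_le_mul (le_abs_self C) (pow_le_pow_left₀ (hε k) hεk r) (by have := hε k; positivity)
    (abs_nonneg C)

variable [InnerProductSpace ℝ E]

lemma contDiff_gaussianTerm (i : ℕ) : ContDiff ℝ ∞ (gaussianTerm i : E → ℝ) :=
  contDiff_exp_neg_mul_norm_sq _

lemma norm_iteratedFDeriv_mul_gaussianTerm_le {a : ℝ} (ha : 0 ≤ a) (m i : ℕ) (x : E) :
    ‖iteratedFDeriv ℝ m (fun y => a * gaussianTerm i y) x‖
      ≤ m ! * (2 * (1 + ‖x‖) ^ 2) ^ m * (a * gaussianTerm i x) := by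
  have hc₁ : ((i : ℝ) + 1)⁻¹ ≤ 1 := inv_le_one_of_one_le₀ (by linarith [i.cast_nonneg (α := ℝ)])
  rw [show (fun y => a * gaussianTerm i y) = a • gaussianTerm i from rfl,
    iteratedFDeriv_const_smul_apply ((contDiff_gaussianTerm i).of_le (mod_cast le_top)).contDiffAt,
    norm_smul, norm_of_nonneg ha, mul_left_comm]
  gcongr
  exact (norm_iteratedFDeriv_exp_neg_mul_norm_sq_le (by positivity) hc₁ m x).trans_eq
    (by rw [gaussianTerm]; ring)

lemma norm_iteratedFDeriv_mul_gaussianTerm_le_uniform (hε : ∀ i, 0 ≤ ε i) (m i : ℕ) (x : E) :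
    ‖iteratedFDeriv ℝ m (fun y => ε i * gaussianTerm i y) x‖
      ≤ m ! * 2 ^ m *
          (ε i * (2 ^ (2 * m) * ((i : ℝ) + 1) ^ (2 * m) + ((2 * m : ℕ) : ℝ) ^ (2 * m))) := by
  refine (norm_iteratedFDeriv_mul_gaussianTerm_le (hε i) m i x).trans ?_
  rw [mul_pow, ← pow_mul, show ∀ a b c d : ℝ, a * (b * c) * (d * gaussianTerm i x)
      = a * b * (d * (c * gaussianTerm i x)) from fun _ _ _ _ => by ring]
  gcongr
  · exact hε i
  · exact one_add_norm_pow_mul_gaussianTerm_le (2 * m) i x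

lemma contDiff_gaussianSeries (hε : ∀ i, 0 ≤ ε i)
    (hsum : ∀ p : ℕ, Summable fun i => ε i * ((i : ℝ) + 1) ^ p) :
    ContDiff ℝ ∞ (gaussianSeries ε : E → ℝ) :=
  contDiff_tsum (fun i => contDiff_const.mul (contDiff_gaussianTerm i))
    (fun m _ => (summable_mul_two_pow_mul_add hsum (2 * m)).mul_left _)
    (fun m i x _ => norm_iteratedFDeriv_mul_gaussianTerm_le_uniform hε m i x)

lemma norm_iteratedFDeriv_gaussianSeries_le (hε : ∀ i, 0 ≤ ε i)
    (hsum : ∀ p : ℕ, Summable fun i => ε i * ((i : ℝ) + 1) ^ p) (m : ℕ) (x : E) :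
    ‖iteratedFDeriv ℝ m (gaussianSeries ε) x‖
      ≤ m ! * (2 * (1 + ‖x‖) ^ 2) ^ m * gaussianSeries ε x := by
  have hv := fun m (_ : ((m : ℕ) : ℕ∞) ≤ ⊤) =>
    (summable_mul_two_pow_mul_add hsum (2 * m)).mul_left ((m ! : ℝ) * 2 ^ m)
  have hnorm : Summable fun i => ‖iteratedFDeriv ℝ m (fun y => ε i * gaussianTerm i y) x‖ :=
    (hv m le_top).of_nonneg_of_le (fun _ => norm_nonneg _) fun i =>
      norm_iteratedFDeriv_mul_gaussianTerm_le_uniform hε m i x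
  unfold gaussianSeries
  rw [iteratedFDeriv_tsum_apply (fun i => contDiff_const.mul (contDiff_gaussianTerm i)) hv
    (fun m i x _ => norm_iteratedFDeriv_mul_gaussianTerm_le_uniform hε m i x) le_top,
    ← tsum_mul_left]
  exact (norm_tsum_le_tsum_norm hnorm).trans <| hnorm.tsum_le_tsum
    (fun i => norm_iteratedFDeriv_mul_gaussianTerm_le (hε i) m i x)
    ((summable_mul_gaussianTerm hε ((hsum 0).congr fun i => by simp) x).mul_left _)

lemma exists_schwartzMap_eq_gaussianSeries (hε : ∀ i, 0 ≤ ε i)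
    (hsum : ∀ p : ℕ, Summable fun i => ε i * ((i : ℝ) + 1) ^ p) :
    ∃ g : 𝓢(E, ℝ), ⇑g = gaussianSeries ε := by
  refine ⟨⟨gaussianSeries ε, contDiff_gaussianSeries hε hsum, fun k n =>
    ⟨n ! * 2 ^ n * ∑' i, ε i * (2 ^ (k + 2 * n) * ((i : ℝ) + 1) ^ (k + 2 * n) +
      ((k + 2 * n : ℕ) : ℝ) ^ (k + 2 * n)), fun x => ?_⟩⟩, rfl⟩
  calc ‖x‖ ^ k * ‖iteratedFDeriv ℝ n (gaussianSeries ε) x‖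
      ≤ (1 + ‖x‖) ^ k * (n ! * (2 * (1 + ‖x‖) ^ 2) ^ n * gaussianSeries ε x) := by
        gcongr
        · linarith [norm_nonneg x]
        · exact norm_iteratedFDeriv_gaussianSeries_le hε hsum n x
    _ = n ! * 2 ^ n * ((1 + ‖x‖) ^ (k + 2 * n) * gaussianSeries ε x) := by
        rw [mul_pow, ← pow_mul, pow_add]; ring
    _ ≤ _ := by
        gcongr
        exact one_add_norm_pow_mul_gaussianSeries_le hε hsum _ x

end GaussianSeries

section Reciprocal

lemma norm_iteratedFDeriv_inv (i : ℕ) {t : ℝ} (ht : 0 < t) :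
    ‖iteratedFDeriv ℝ i (Inv.inv : ℝ → ℝ) t‖ = i ! / t ^ (i + 1) := by
  rw [norm_iteratedFDeriv_eq_norm_iteratedDeriv, iteratedDeriv_eq_iterate, iter_deriv_inv,
    show (-1 - i : ℤ) = -((i + 1 : ℕ) : ℤ) by push_cast; ring, zpow_neg, zpow_natCast]
  simp [abs_of_pos ht, div_eq_mul_inv]

variable {E F : Type*} [NormedAddCommGroup E] [NormedSpace ℝ E] [NormedAddCommGroup F]
  [NormedSpace ℝ F]

lemma norm_iteratedFDeriv_inv_comp_le {g : E → ℝ} (hg : ContDiff ℝ ∞ g)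
    (hg_pos : ∀ x, 0 < g x) {S P : ℝ} (hS : 1 ≤ S) (hP : 0 ≤ P) {m : ℕ} {x : E} (hgS : g x ≤ S)
    (hderiv : ∀ i ≤ m, ‖iteratedFDeriv ℝ i g x‖ ≤ i ! * P ^ i * g x) :
    ‖iteratedFDeriv ℝ m (fun y => (g y)⁻¹) x‖
      ≤ m ! * (m ! * S ^ m / g x ^ (m + 1)) * (m ! * P * S) ^ m := by
  have hu := hg_pos x
  have hfact : ∀ {i}, i ≤ m → (i ! : ℝ) ≤ m ! := fun hi => by exact_mod_cast Nat.factorial_le hi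
  refine norm_iteratedFDeriv_comp_le' (g := Inv.inv) (t := Set.Ioi 0)
    (Set.range_subset_iff.2 hg_pos) (uniqueDiffOn_Ioi 0)
    ((contDiffOn_inv ℝ).mono fun y hy => ne_of_gt hy) hg (mod_cast le_top) x
    (fun i hi => ?_) (fun i hi₁ hi => ?_)
  · rw [iteratedFDerivWithin_of_isOpen i isOpen_Ioi hu, norm_iteratedFDeriv_inv i hu,
      div_le_div_iff₀ (by positivity) (by positivity)]
    calc (i ! : ℝ) * g x ^ (m + 1) = i ! * g x ^ (m - i) * g x ^ (i + 1) := by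
          rw [mul_assoc, ← pow_add]; congr 2; omega
      _ ≤ m ! * S ^ m * g x ^ (i + 1) := by
          gcongr
          exact (pow_le_pow_left₀ hu.le hgS _).trans (pow_le_pow_right₀ hS (by omega))
  · calc ‖iteratedFDeriv ℝ i g x‖ ≤ i ! * P ^ i * g x := hderiv i hi
      _ ≤ (m ! : ℝ) ^ i * P ^ i * S ^ i := by
          gcongr
          · exact (hfact hi).trans (le_self_pow₀ (Nat.one_le_cast.2 m.factorial_pos) (by omega))
          · exact hgS.trans (le_self_pow₀ hS (by omega))
      _ = (m ! * P * S) ^ i := by ring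

lemma exists_norm_iteratedFDeriv_inv_comp_le {g : E → ℝ} (hg : ContDiff ℝ ∞ g)
    (hg_pos : ∀ x, 0 < g x) {S : ℝ} (hS : 1 ≤ S) (hgS : ∀ x, g x ≤ S)
    (hderiv : ∀ m x, ‖iteratedFDeriv ℝ m g x‖ ≤ m ! * (2 * (1 + ‖x‖) ^ 2) ^ m * g x) (m : ℕ) :
    ∃ K, 0 ≤ K ∧ ∀ x,
      ‖iteratedFDeriv ℝ m (fun y => (g y)⁻¹) x‖ ≤ K * (1 + ‖x‖) ^ (2 * m) / g x ^ (m + 1) := by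
  refine ⟨m ! * (m ! * S ^ m) * (m ! * 2 * S) ^ m, by positivity, fun x => ?_⟩
  refine (norm_iteratedFDeriv_inv_comp_le hg hg_pos hS (by positivity) (hgS x)
    fun i _ => hderiv i x).trans_eq ?_
  rw [show (m ! * (2 * (1 + ‖x‖) ^ 2) * S) = m ! * 2 * S * (1 + ‖x‖) ^ 2 by ring, mul_pow,
    ← pow_mul]
  ring

lemma exists_schwartzMap_eq_inv_smul {g : E → ℝ} (hg : ContDiff ℝ ∞ g)
    (hg_pos : ∀ x, 0 < g x) {S : ℝ} (hS : 1 ≤ S) (hgS : ∀ x, g x ≤ S)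
    (hderiv : ∀ m x, ‖iteratedFDeriv ℝ m g x‖ ≤ m ! * (2 * (1 + ‖x‖) ^ 2) ^ m * g x)
    (f : 𝓢(E, F))
    (hf : ∀ M n r : ℕ, ∃ C, ∀ x, (1 + ‖x‖) ^ M * ‖iteratedFDeriv ℝ n f x‖ ≤ C * g x ^ r) :
    ∃ f₀ : 𝓢(E, F), ∀ x, f₀ x = (g x)⁻¹ • f x := by
  have hinv : ContDiff ℝ ∞ fun y => (g y)⁻¹ := hg.inv fun y => (hg_pos y).ne'
  refine ⟨⟨fun x => (g x)⁻¹ • f x, hinv.smul (f.smooth ⊤), fun k n => ?_⟩, fun _ => rfl⟩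
  choose K hK₀ hK using exists_norm_iteratedFDeriv_inv_comp_le hg hg_pos hS hgS hderiv
  choose C hC using fun i => hf (k + 2 * i) (n - i) (i + 1)
  refine ⟨∑ i ∈ Finset.range (n + 1), n.choose i * K i * C i, fun x => ?_⟩
  have hu := hg_pos x
  calc ‖x‖ ^ k * ‖iteratedFDeriv ℝ n (fun y => (g y)⁻¹ • f y) x‖
      ≤ (1 + ‖x‖) ^ k * ∑ i ∈ Finset.range (n + 1), n.choose i *
          ‖iteratedFDeriv ℝ i (fun y => (g y)⁻¹) x‖ * ‖iteratedFDeriv ℝ (n - i) f x‖ := by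
        gcongr
        · linarith [norm_nonneg x]
        · exact norm_iteratedFDeriv_smul_le hinv (f.smooth ⊤) x (mod_cast le_top)
    _ ≤ ∑ i ∈ Finset.range (n + 1), n.choose i * K i * C i := by
        rw [Finset.mul_sum]
        refine Finset.sum_le_sum fun i _ => ?_
        calc (1 + ‖x‖) ^ k * (n.choose i * ‖iteratedFDeriv ℝ i (fun y => (g y)⁻¹) x‖ *
              ‖iteratedFDeriv ℝ (n - i) f x‖)
            ≤ (1 + ‖x‖) ^ k * (n.choose i * (K i * (1 + ‖x‖) ^ (2 * i) / g x ^ (i + 1)) *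
              ‖iteratedFDeriv ℝ (n - i) f x‖) := by
              gcongr; exact hK i x
          _ = n.choose i * K i * ((1 + ‖x‖) ^ (k + 2 * i) * ‖iteratedFDeriv ℝ (n - i) f x‖) /
                g x ^ (i + 1) := by ring
          _ ≤ n.choose i * K i * (C i * g x ^ (i + 1)) / g x ^ (i + 1) := by
              exact div_le_div_of_nonneg_right (mul_le_mul_of_nonneg_left (hC i x)
                (mul_nonneg (Nat.cast_nonneg _) (hK₀ i))) (by positivity)
          _ = n.choose i * K i * C i := by field_simp

end Reciprocal

/-- For every Schwartz function `f` on `ℝ^d` there exist a Schwartz function `f₀` and a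
strictly positive, rotation-invariant Schwartz function `g` with `f = f₀ * g`. -/
theorem stmt0 (d : ℕ) (f : SchwartzMap (EuclideanSpace ℝ (Fin d)) ℂ) :
    ∃ (f₀ : SchwartzMap (EuclideanSpace ℝ (Fin d)) ℂ)
      (g : SchwartzMap (EuclideanSpace ℝ (Fin d)) ℝ),
      (∀ x, 0 < g x) ∧
      (∀ x y, ‖x‖ = ‖y‖ → g x = g y) ∧
      (∀ x, f x = f₀ x * (g x : ℂ)) := by
  obtain ⟨ε, hε, hsum, hdom⟩ := f.exists_dominatingWeight
  have hε₀ : ∀ i, 0 ≤ ε i := fun i => (hε i).le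
  have hs : Summable ε := (hsum 0).congr fun i => by simp
  obtain ⟨g, hg⟩ := exists_schwartzMap_eq_gaussianSeries (E := EuclideanSpace ℝ (Fin d)) hε₀ hsum
  obtain ⟨f₀, hf₀⟩ := exists_schwartzMap_eq_inv_smul (contDiff_gaussianSeries hε₀ hsum)
    (gaussianSeries_pos hε hs) (le_max_left 1 (∑' i, ε i))
    (fun x => (gaussianSeries_le_tsum hε₀ hs x).trans (le_max_right _ _))
    (norm_iteratedFDeriv_gaussianSeries_le hε₀ hsum) f
    (fun M n r => (hdom M n r).elim fun _ hC => exists_le_mul_gaussianSeries_pow hε₀ hs hC)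
  refine ⟨f₀, g, fun x => hg ▸ gaussianSeries_pos hε hs x,
    fun x y hxy => hg ▸ gaussianSeries_eq_of_norm_eq hxy, fun x => ?_⟩
  have hgx : (gaussianSeries ε x : ℂ) ≠ 0 := mod_cast (gaussianSeries_pos hε hs x).ne'
  rw [hf₀, hg, Complex.real_smul, Complex.ofReal_inv, mul_comm, ← mul_assoc, mul_inv_cancel₀ hgx,
    one_mul]
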